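/- arXiv:1711.02620 — 2 statements merged into one kernel-verified Lean document; each statement's English description precedes it below -/
import Mathlib

section
/- The 'Match the Longest' matching policy is non-expansive for the ℓ1 norm: for any two class-detail states x, x' in the state space, any arriving class v, and any common tie-breaking permutation σ, one has ‖x' ⊙_ML (v,σ) − x ⊙_ML (v,σ)‖_1 ≤ ‖x' − x‖_1. -/
open Finset

variable {V : Type*} [Fintype V] [DecidableEq V]

/-- Classes compatible with `v` having a nonempty queue in state `x`. -/
def compatSet (G : SimpleGraph V) [DecidableRel G.Adj] (x : V → ℕ) (v : V) : Finset V :=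
  Finset.univ.filter (fun j => G.Adj v j ∧ 0 < x j)

/-- One step of the 'Match the Longest' policy: the arriving `v`-item is matched to a
compatible class with the longest queue, ties broken according to the linear order `σ`
(the smallest such class w.r.t. `σ`); if no compatible class has a nonempty queue, the
item is added to the buffer. -/
def mlStep (G : SimpleGraph V) [DecidableRel G.Adj] (σ : LinearOrder V)
    (x : V → ℕ) (v : V) : V → ℕ :=
  if h : (compatSet G x v).Nonempty then
    let c := (compatSet G x v).filter (fun j => x j = (compatSet G x v).sup' h x)
    let k := @Finset.min' V σ c (by
      obtain ⟨j, hj, hje⟩ := Finset.exists_mem_eq_sup' h x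
      exact ⟨j, Finset.mem_filter.2 ⟨hj, hje.symm⟩⟩)
    fun i => if i = k then x i - 1 else x i
  else fun i => if i = v then x i + 1 else x i

/-- ℓ1 distance between two class-detail vectors. -/
def l1Dist (x y : V → ℕ) : ℕ :=
  ∑ i, ((x i : ℤ) - (y i : ℤ)).natAbs

lemma mlStep_of_nonempty (G : SimpleGraph V) [DecidableRel G.Adj] (σ : LinearOrder V)
    (x : V → ℕ) (v : V) (h : (compatSet G x v).Nonempty)
    (hc : ((compatSet G x v).filter (fun j => x j = (compatSet G x v).sup' h x)).Nonempty) :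
    mlStep G σ x v = fun i => if i = @Finset.min' V σ _ hc then x i - 1 else x i := by
  rw [mlStep, dif_pos h]

lemma mlStep_of_empty (G : SimpleGraph V) [DecidableRel G.Adj] (σ : LinearOrder V)
    (x : V → ℕ) (v : V) (h : ¬ (compatSet G x v).Nonempty) :
    mlStep G σ x v = fun i => if i = v then x i + 1 else x i := by
  rw [mlStep, dif_neg h]

lemma l1_aux (x x' y y' : V → ℕ) (s : Finset V)
    (h1 : ∀ i ∉ s, y i = x i) (h1' : ∀ i ∉ s, y' i = x' i)
    (h2 : ∑ i ∈ s, ((y i : ℤ) - (y' i : ℤ)).natAbs ≤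
          ∑ i ∈ s, ((x i : ℤ) - (x' i : ℤ)).natAbs) :
    l1Dist y y' ≤ l1Dist x x' := by
  unfold l1Dist
  rw [← Finset.sum_add_sum_compl s (fun i => ((y i : ℤ) - (y' i : ℤ)).natAbs),
      ← Finset.sum_add_sum_compl s (fun i => ((x i : ℤ) - (x' i : ℤ)).natAbs)]
  refine add_le_add h2 (le_of_eq (Finset.sum_congr rfl fun i hi => ?_))
  rw [h1 i (by simpa using hi), h1' i (by simpa using hi)]

/-- 'Match the Longest' is non-expansive for the ℓ1 norm. -/
theorem ml_nonexpansive (G : SimpleGraph V) [DecidableRel G.Adj]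
    (σ : LinearOrder V) (x x' : V → ℕ)
    (hx : ∀ i j, G.Adj i j → x i * x j = 0)
    (hx' : ∀ i j, G.Adj i j → x' i * x' j = 0) (v : V) :
    l1Dist (mlStep G σ x v) (mlStep G σ x' v) ≤ l1Dist x x' := by
  classical
  by_cases h : (compatSet G x v).Nonempty
  · -- x matches
    have hc : ((compatSet G x v).filter
        (fun j => x j = (compatSet G x v).sup' h x)).Nonempty := by
      obtain ⟨j, hj, hje⟩ := Finset.exists_mem_eq_sup' h x
      exact ⟨j, Finset.mem_filter.2 ⟨hj, hje.symm⟩⟩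
    set k := @Finset.min' V σ _ hc with hk_def
    have hstep : mlStep G σ x v = fun i => if i = k then x i - 1 else x i :=
      mlStep_of_nonempty G σ x v h hc
    have hk_mem := @Finset.min'_mem V σ _ hc
    rw [Finset.mem_filter] at hk_mem
    have hk_compat := hk_mem.1
    have hk_sup := hk_mem.2
    have hk_pos : 0 < x k := ((Finset.mem_filter.1 hk_compat).2).2
    have hk_adj : G.Adj v k := ((Finset.mem_filter.1 hk_compat).2).1
    by_cases h' : (compatSet G x' v).Nonempty
    · -- x' matches too
      have hc' : ((compatSet G x' v).filter
          (fun j => x' j = (compatSet G x' v).sup' h' x')).Nonempty := by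
        obtain ⟨j, hj, hje⟩ := Finset.exists_mem_eq_sup' h' x'
        exact ⟨j, Finset.mem_filter.2 ⟨hj, hje.symm⟩⟩
      set k' := @Finset.min' V σ _ hc' with hk'_def
      have hstep' : mlStep G σ x' v = fun i => if i = k' then x' i - 1 else x' i :=
        mlStep_of_nonempty G σ x' v h' hc'
      have hk'_mem := @Finset.min'_mem V σ _ hc'
      rw [Finset.mem_filter] at hk'_mem
      have hk'_compat := hk'_mem.1
      have hk'_sup := hk'_mem.2
      have hk'_pos : 0 < x' k' := ((Finset.mem_filter.1 hk'_compat).2).2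
      have hk'_adj : G.Adj v k' := ((Finset.mem_filter.1 hk'_compat).2).1
      rw [hstep, hstep']
      by_cases hkk : k = k'
      · -- same class matched
        refine l1_aux x x' _ _ {k} (fun i hi => ?_) (fun i hi => ?_) ?_
        · simp only [Finset.mem_singleton] at hi; simp [hi]
        · simp only [Finset.mem_singleton] at hi
          rw [if_neg (fun hik' => hi (hik'.trans hkk.symm))]
        · have hk'_pos2 : 0 < x' k := by rw [hkk]; exact hk'_pos
          simp only [Finset.sum_singleton, if_pos rfl, if_pos hkk, eq_self_iff_true, if_true]
          omega
      · -- different classes: key claim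
        have claim : x' k < x k ∨ x k' < x' k' := by
          by_contra hcon
          push_neg at hcon
          obtain ⟨h1, h2⟩ := hcon
          -- x k ≤ x' k and x' k' ≤ x k'
          have hx'k_pos : 0 < x' k := lt_of_lt_of_le hk_pos h1
          have hxk'_pos : 0 < x k' := lt_of_lt_of_le hk'_pos h2
          have hkmem' : k ∈ compatSet G x' v :=
            Finset.mem_filter.2 ⟨Finset.mem_univ k, hk_adj, hx'k_pos⟩
          have hk'mem : k' ∈ compatSet G x v :=
            Finset.mem_filter.2 ⟨Finset.mem_univ k', hk'_adj, hxk'_pos⟩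
          have hle1 : x' k ≤ x' k' := by
            rw [hk'_sup]; exact Finset.le_sup' x' hkmem'
          have hle2 : x k' ≤ x k := by
            rw [hk_sup]; exact Finset.le_sup' x hk'mem
          -- all four equal
          have heq1 : x k = x k' := le_antisymm (le_trans h1 (le_trans hle1 h2)) hle2
          have heq2 : x' k' = x' k := le_antisymm (le_trans h2 (le_trans hle2 h1)) hle1
          have hk'_in : k' ∈ (compatSet G x v).filter
              (fun j => x j = (compatSet G x v).sup' h x) :=
            Finset.mem_filter.2 ⟨hk'mem, by rw [← heq1, hk_sup]⟩
          have hk_in : k ∈ (compatSet G x' v).filter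
              (fun j => x' j = (compatSet G x' v).sup' h' x') :=
            Finset.mem_filter.2 ⟨hkmem', by rw [← heq2, hk'_sup]⟩
          have hm1 := @Finset.min'_le V σ _ k' hk'_in
          have hm2 := @Finset.min'_le V σ _ k hk_in
          exact hkk (σ.le_antisymm _ _ hm1 hm2)
        refine l1_aux x x' _ _ {k, k'} (fun i hi => ?_) (fun i hi => ?_) ?_
        · simp only [Finset.mem_insert, Finset.mem_singleton, not_or] at hi
          simp [hi.1]
        · simp only [Finset.mem_insert, Finset.mem_singleton, not_or] at hi
          simp [hi.2]
        · rw [Finset.sum_pair hkk, Finset.sum_pair hkk]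
          simp only [if_pos rfl, if_neg hkk, if_neg (Ne.symm hkk), eq_self_iff_true, if_true]
          omega
    · -- x matches, x' stores
      have hx'0 : ∀ j, G.Adj v j → x' j = 0 := by
        intro j hj
        by_contra hne
        exact h' ⟨j, Finset.mem_filter.2 ⟨Finset.mem_univ j, hj, Nat.pos_of_ne_zero hne⟩⟩
      have hstep' : mlStep G σ x' v = fun i => if i = v then x' i + 1 else x' i :=
        mlStep_of_empty G σ x' v h'
      have hkv : k ≠ v := fun heq => (G.irrefl (heq ▸ hk_adj))
      rw [hstep, hstep']
      refine l1_aux x x' _ _ {k, v} (fun i hi => ?_) (fun i hi => ?_) ?_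
      · simp only [Finset.mem_insert, Finset.mem_singleton, not_or] at hi
        simp [hi.1]
      · simp only [Finset.mem_insert, Finset.mem_singleton, not_or] at hi
        simp [hi.2]
      · rw [Finset.sum_pair hkv, Finset.sum_pair hkv]
        simp only [if_pos rfl, if_neg hkv, if_neg (Ne.symm hkv), eq_self_iff_true, if_true]
        have := hx'0 k hk_adj
        omega
  · by_cases h' : (compatSet G x' v).Nonempty
    · -- x stores, x' matches (symmetric)
      have hc' : ((compatSet G x' v).filter
          (fun j => x' j = (compatSet G x' v).sup' h' x')).Nonempty := by
        obtain ⟨j, hj, hje⟩ := Finset.exists_mem_eq_sup' h' x'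
        exact ⟨j, Finset.mem_filter.2 ⟨hj, hje.symm⟩⟩
      set k' := @Finset.min' V σ _ hc' with hk'_def
      have hstep' : mlStep G σ x' v = fun i => if i = k' then x' i - 1 else x' i :=
        mlStep_of_nonempty G σ x' v h' hc'
      have hk'_mem := @Finset.min'_mem V σ _ hc'
      rw [Finset.mem_filter] at hk'_mem
      have hk'_compat := hk'_mem.1
      have hk'_pos : 0 < x' k' := ((Finset.mem_filter.1 hk'_compat).2).2
      have hk'_adj : G.Adj v k' := ((Finset.mem_filter.1 hk'_compat).2).1
      have hx0 : ∀ j, G.Adj v j → x j = 0 := by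
        intro j hj
        by_contra hne
        exact h ⟨j, Finset.mem_filter.2 ⟨Finset.mem_univ j, hj, Nat.pos_of_ne_zero hne⟩⟩
      have hstep : mlStep G σ x v = fun i => if i = v then x i + 1 else x i :=
        mlStep_of_empty G σ x v h
      have hkv : k' ≠ v := fun heq => (G.irrefl (heq ▸ hk'_adj))
      rw [hstep, hstep']
      refine l1_aux x x' _ _ {k', v} (fun i hi => ?_) (fun i hi => ?_) ?_
      · simp only [Finset.mem_insert, Finset.mem_singleton, not_or] at hi
        simp [hi.2]
      · simp only [Finset.mem_insert, Finset.mem_singleton, not_or] at hi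
        simp [hi.1]
      · rw [Finset.sum_pair hkv, Finset.sum_pair hkv]
        simp only [if_pos rfl, if_neg hkv, if_neg (Ne.symm hkv), eq_self_iff_true, if_true]
        have := hx0 k' hk'_adj
        omega
    · -- both store
      rw [mlStep_of_empty G σ x v h, mlStep_of_empty G σ x' v h']
      refine l1_aux x x' _ _ {v} (fun i hi => ?_) (fun i hi => ?_) ?_
      · simp only [Finset.mem_singleton] at hi; simp [hi]
      · simp only [Finset.mem_singleton] at hi; simp [hi]
      · simp only [Finset.sum_singleton, if_pos rfl, eq_self_iff_true, if_true]
        omega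
end

section
/- Any random matching policy (where the arriving item's preference order over compatible classes is drawn from a fixed distribution and it matches with the first class in that order having a nonempty queue) is non-expansive for the ℓ1 norm on class-detail states, provided the same preference list σ is used in both systems. -/
open Finset

variable {V : Type*} [Fintype V] [DecidableEq V]

/-- One step of a random matching policy: the preference list `σ` gives, for each
arriving class `v`, a linear (preference) order on classes; the arriving `v`-item is
matched to the most preferred compatible class with a nonempty queue, and is added to
the buffer if there is none. -/
def randStep (G : SimpleGraph V) [DecidableRel G.Adj] (σ : V → LinearOrder V)
    (x : V → ℕ) (v : V) : V → ℕ :=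
  if h : (compatSet G x v).Nonempty then
    let k := @Finset.min' V (σ v) (compatSet G x v) h
    fun i => if i = k then x i - 1 else x i
  else fun i => if i = v then x i + 1 else x i

lemma l1_comm (x y : V → ℕ) : l1Dist x y = l1Dist y x := by
  unfold l1Dist
  refine Finset.sum_congr rfl fun i _ => ?_
  omega

lemma sum_le_of_two (F G : V → ℕ) (a b : V) (hab : a ≠ b)
    (h2 : F a + F b ≤ G a + G b) (h : ∀ i, i ≠ a → i ≠ b → F i = G i) :
    ∑ i, F i ≤ ∑ i, G i := by
  rw [← Finset.sum_compl_add_sum ({a, b} : Finset V) F,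
      ← Finset.sum_compl_add_sum ({a, b} : Finset V) G,
      Finset.sum_pair hab, Finset.sum_pair hab]
  have : ∑ i ∈ ({a, b} : Finset V)ᶜ, F i = ∑ i ∈ ({a, b} : Finset V)ᶜ, G i := by
    refine Finset.sum_congr rfl fun i hi => ?_
    simp only [Finset.mem_compl, Finset.mem_insert, Finset.mem_singleton] at hi
    exact h i (fun e => hi (Or.inl e)) (fun e => hi (Or.inr e))
  omega

lemma mem_compat {G : SimpleGraph V} [DecidableRel G.Adj] {x : V → ℕ} {v j : V} :
    j ∈ compatSet G x v ↔ G.Adj v j ∧ 0 < x j := by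
  simp [compatSet]

/-- asymmetric case: x side has a compatible nonempty class, x' side doesn't. -/
lemma case_mixed (G : SimpleGraph V) [DecidableRel G.Adj]
    (σ : V → LinearOrder V) (x x' : V → ℕ)
    (hx : ∀ i j, G.Adj i j → x i * x j = 0) (v : V)
    (h : (compatSet G x v).Nonempty) (h' : ¬ (compatSet G x' v).Nonempty) :
    l1Dist (randStep G σ x v) (randStep G σ x' v) ≤ l1Dist x x' := by
  unfold randStep l1Dist
  rw [dif_pos h, dif_neg h']
  set k := @Finset.min' V (σ v) (compatSet G x v) h with hk
  have hkmem : k ∈ compatSet G x v := @Finset.min'_mem V (σ v) _ h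
  rw [mem_compat] at hkmem
  obtain ⟨hadj, hxk⟩ := hkmem
  have hvk : v ≠ k := G.ne_of_adj hadj
  have hxv : x v = 0 := by
    rcases Nat.mul_eq_zero.mp (hx v k hadj) with h0 | h0
    · exact h0
    · omega
  have hx'k : x' k = 0 := by
    by_contra hc
    exact h' ⟨k, mem_compat.mpr ⟨hadj, by omega⟩⟩
  refine sum_le_of_two _ _ v k hvk ?_ ?_
  · simp only [if_neg hvk, if_neg (Ne.symm hvk), eq_self_iff_true, if_true]
    rw [Nat.cast_sub hxk]
    push_cast
    omega
  · intro i hi1 hi2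
    simp only [if_neg hi2, if_neg hi1]

/-- Any random matching policy (in particular any priority policy and the uniform
policy) is non-expansive for the ℓ1 norm, provided the same preference list `σ` is
used in both systems. -/
theorem random_nonexpansive (G : SimpleGraph V) [DecidableRel G.Adj]
    (σ : V → LinearOrder V) (x x' : V → ℕ)
    (hx : ∀ i j, G.Adj i j → x i * x j = 0)
    (hx' : ∀ i j, G.Adj i j → x' i * x' j = 0) (v : V) :
    l1Dist (randStep G σ x v) (randStep G σ x' v) ≤ l1Dist x x' := by
  by_cases h : (compatSet G x v).Nonempty <;> by_cases h' : (compatSet G x' v).Nonempty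
  · -- both nonempty
    unfold randStep l1Dist
    rw [dif_pos h, dif_pos h']
    set k := @Finset.min' V (σ v) (compatSet G x v) h with hkdef
    set k' := @Finset.min' V (σ v) (compatSet G x' v) h' with hk'def
    have hkmem : k ∈ compatSet G x v := @Finset.min'_mem V (σ v) _ h
    have hk'mem : k' ∈ compatSet G x' v := @Finset.min'_mem V (σ v) _ h'
    rw [mem_compat] at hkmem hk'mem
    obtain ⟨hadj, hxk⟩ := hkmem
    obtain ⟨hadj', hx'k'⟩ := hk'mem
    by_cases hkk : k = k'
    · rw [hkk] at hxk ⊢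
      refine Finset.sum_le_sum fun i _ => ?_
      by_cases hik : i = k'
      · subst hik
        simp only [eq_self_iff_true, if_true]
        rw [Nat.cast_sub hxk, Nat.cast_sub hx'k']
        omega
      · simp only [if_neg hik]; exact le_refl _
    · -- k ≠ k'; then not both x' k > 0 and x k' > 0
      have hnotboth : x' k = 0 ∨ x k' = 0 := by
        by_contra hc
        push_neg at hc
        have h1 : k ∈ compatSet G x' v := mem_compat.mpr ⟨hadj, by omega⟩
        have h2 : k' ∈ compatSet G x v := mem_compat.mpr ⟨hadj', by omega⟩
        have l1 := @Finset.min'_le V (σ v) _ k h1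
        have l2 := @Finset.min'_le V (σ v) _ k' h2
        exact hkk (@le_antisymm V (σ v).toPartialOrder k k' l2 l1)
      refine sum_le_of_two _ _ k k' hkk ?_ ?_
      · simp only [if_neg hkk, if_neg (Ne.symm hkk), eq_self_iff_true, if_true]
        rw [Nat.cast_sub hxk, Nat.cast_sub hx'k']
        rcases hnotboth with h0 | h0 <;> rw [h0] <;> push_cast <;> omega
      · intro i hi1 hi2
        simp only [if_neg hi1, if_neg hi2]
  · exact case_mixed G σ x x' hx v h h'
  · rw [l1_comm x x', ← l1_comm (randStep G σ x' v)]
    exact case_mixed G σ x' x hx' v h' h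
  · -- both empty
    unfold randStep l1Dist
    rw [dif_neg h, dif_neg h']
    refine le_of_eq (Finset.sum_congr rfl fun i _ => ?_)
    by_cases hiv : i = v
    · subst hiv; simp only [eq_self_iff_true, if_true]; push_cast; omega
    · simp only [if_neg hiv]
end
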